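/- arXiv:math/0607362 — 3 statements merged into one kernel-verified Lean document; each statement's English description precedes it below -/
import Mathlib

section
/- Let H be a Hilbert space and V an isometry on H. On the space S of locally square-integrable sections f : ℝ≥0 → H that are eventually V-stable (f(α+1) = V f(α) for all sufficiently large α), the sesquilinear form ⟨f, g⟩ := lim_{m→∞} ∫_m^{m+1} ⟨f(α), g(α)⟩ dα is a positive semidefinite inner product, and ⟨f, f⟩ = 0 if and only if f(α) = 0 for almost all sufficiently large α. -/
open MeasureTheory Filter
open scoped InnerProductSpace Topology

/-- `f` is eventually `V`-stable: `f(α+1) = V f(α)` for all sufficiently large `α`. -/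
def EventuallyStable {H : Type*} [NormedAddCommGroup H] [InnerProductSpace ℂ H]
    (V : H →ₗᵢ[ℂ] H) (f : ℝ → H) : Prop :=
  ∃ α₀ : ℝ, ∀ α : ℝ, α₀ ≤ α → f (α + 1) = V (f α)

/-- `f` is locally square-integrable (and measurable). -/
def LocSqIntegrable {H : Type*} [NormedAddCommGroup H] [InnerProductSpace ℂ H]
    (f : ℝ → H) : Prop :=
  AEStronglyMeasurable f volume ∧
    ∀ a b : ℝ, IntegrableOn (fun α => ‖f α‖ ^ 2) (Set.Ioc a b) volume

lemma shift_integral {H : Type*} [NormedAddCommGroup H] [InnerProductSpace ℂ H]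
    (V : H →ₗᵢ[ℂ] H) {f g : ℝ → H} {α₀ : ℝ}
    (hf : ∀ α : ℝ, α₀ ≤ α → f (α + 1) = V (f α))
    (hg : ∀ α : ℝ, α₀ ≤ α → g (α + 1) = V (g α))
    {m : ℝ} (hm : α₀ ≤ m) :
    ∫ α in (m+1)..(m+2), ⟪f α, g α⟫_ℂ = ∫ α in m..(m+1), ⟪f α, g α⟫_ℂ := by
  have h := intervalIntegral.integral_comp_add_right (a := m) (b := m+1)
      (fun α => ⟪f α, g α⟫_ℂ) 1
  have h2 : (m + 1 + 1 : ℝ) = m + 2 := by ring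
  rw [h2] at h
  rw [← h]
  apply intervalIntegral.integral_congr
  intro x hx
  rw [Set.uIcc_of_le (by linarith)] at hx
  have hx1 : α₀ ≤ x := le_trans hm hx.1
  simp only [hf x hx1, hg x hx1, LinearIsometry.inner_map_map]

lemma eventually_const_integral {H : Type*} [NormedAddCommGroup H] [InnerProductSpace ℂ H]
    (V : H →ₗᵢ[ℂ] H) {f g : ℝ → H}
    (hf : EventuallyStable V f) (hg : EventuallyStable V g) :
    ∃ L : ℂ, Tendsto (fun m : ℕ => ∫ α in (m : ℝ)..((m : ℝ) + 1), ⟪f α, g α⟫_ℂ)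
        atTop (𝓝 L) ∧
      ∃ N : ℕ, ∀ n : ℕ, N ≤ n → (∫ α in (n : ℝ)..((n : ℝ) + 1), ⟪f α, g α⟫_ℂ) = L := by
  obtain ⟨a, ha⟩ := hf
  obtain ⟨b, hb⟩ := hg
  set α₀ : ℝ := max a b with hα₀
  have hfa : ∀ α : ℝ, α₀ ≤ α → f (α + 1) = V (f α) :=
    fun α h => ha α (le_trans (le_max_left _ _) h)
  have hgb : ∀ α : ℝ, α₀ ≤ α → g (α + 1) = V (g α) :=
    fun α h => hb α (le_trans (le_max_right _ _) h)
  set N : ℕ := ⌈α₀⌉₊ with hN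
  have hNα : α₀ ≤ (N : ℝ) := Nat.le_ceil _
  have hconst : ∀ n : ℕ, N ≤ n → (∫ α in (n : ℝ)..((n : ℝ) + 1), ⟪f α, g α⟫_ℂ) =
      ∫ α in (N : ℝ)..((N : ℝ) + 1), ⟪f α, g α⟫_ℂ := by
    intro n hn
    induction n, hn using Nat.le_induction with
    | base => rfl
    | succ n hn ih =>
      rw [← ih]
      have hm : α₀ ≤ (n : ℝ) := le_trans hNα (by exact_mod_cast hn)
      have hs := shift_integral V hfa hgb hm
      push_cast
      rw [show (n : ℝ) + 1 + 1 = (n : ℝ) + 2 by ring]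
      exact hs
  refine ⟨∫ α in (N : ℝ)..((N : ℝ) + 1), ⟪f α, g α⟫_ℂ, ?_, N, hconst⟩
  apply Tendsto.congr' ?_ tendsto_const_nhds
  rw [EventuallyEq, eventually_atTop]
  exact ⟨N, fun n hn => (hconst n hn).symm⟩

/-- On the space of locally square-integrable, eventually `V`-stable sections, the form
`⟪f, g⟫ := lim_{m→∞} ∫_m^{m+1} ⟪f(α), g(α)⟫ dα` is a well-defined positive semidefinite
inner product, and `⟪f, f⟫ = 0` iff `f` vanishes almost everywhere from some point on. -/
theorem stable_sections_semiinner {H : Type*} [NormedAddCommGroup H] [InnerProductSpace ℂ H]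
    (V : H →ₗᵢ[ℂ] H) (f : ℝ → H) (hf : LocSqIntegrable f ∧ EventuallyStable V f) :
    (∀ g : ℝ → H, LocSqIntegrable g ∧ EventuallyStable V g →
      ∃ L : ℂ, Tendsto (fun m : ℕ => ∫ α in (m : ℝ)..((m : ℝ) + 1), ⟪f α, g α⟫_ℂ)
        atTop (𝓝 L)) ∧
    ∃ L : ℂ, Tendsto (fun m : ℕ => ∫ α in (m : ℝ)..((m : ℝ) + 1), ⟪f α, f α⟫_ℂ)
        atTop (𝓝 L) ∧ L.im = 0 ∧ 0 ≤ L.re ∧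
      (L = 0 ↔ ∃ β : ℝ, ∀ᵐ α ∂volume, β ≤ α → f α = 0) := by
  obtain ⟨hfi, hfs⟩ := hf
  constructor
  · intro g hg
    obtain ⟨L, hL, _⟩ := eventually_const_integral V hfs hg.2
    exact ⟨L, hL⟩
  obtain ⟨L, hL, N, hconst⟩ := eventually_const_integral V hfs hfs
  -- each integral is a nonnegative real number
  have hreal : ∀ n : ℕ, (∫ α in (n : ℝ)..((n : ℝ) + 1), ⟪f α, f α⟫_ℂ) =
      ((∫ α in (n : ℝ)..((n : ℝ) + 1), ‖f α‖ ^ 2 : ℝ) : ℂ) := by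
    intro n
    rw [← intervalIntegral.integral_ofReal]
    apply intervalIntegral.integral_congr
    intro x _
    simp only
    rw [inner_self_eq_norm_sq_to_K]
    norm_cast
  have hnonneg : ∀ n : ℕ, 0 ≤ (∫ α in (n : ℝ)..((n : ℝ) + 1), ‖f α‖ ^ 2 : ℝ) := by
    intro n
    apply intervalIntegral.integral_nonneg (by linarith)
    intro x _
    positivity
  have hLform : L = ((∫ α in (N : ℝ)..((N : ℝ) + 1), ‖f α‖ ^ 2 : ℝ) : ℂ) := by
    rw [← hconst N le_rfl, hreal N]
  refine ⟨L, hL, by rw [hLform]; simp, by rw [hLform]; simpa using hnonneg N, ?_, ?_⟩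
  · -- L = 0 → vanishing from N + 1 on
    intro hL0
    have key : ∀ n : ℕ, ∀ᵐ α ∂(volume : Measure ℝ),
        α ∈ Set.Ioc ((N + n : ℕ) : ℝ) (((N + n : ℕ) : ℝ) + 1) → f α = 0 := by
      intro n
      have h1 : (∫ α in ((N + n : ℕ) : ℝ)..(((N + n : ℕ) : ℝ) + 1), ‖f α‖ ^ 2 : ℝ) = 0 := by
        have h := hconst (N + n) (Nat.le_add_right _ _)
        rw [hreal (N + n), hL0] at h
        exact_mod_cast h
      rw [intervalIntegral.integral_of_le (by linarith)] at h1
      have h2 := (MeasureTheory.setIntegral_eq_zero_iff_of_nonneg_ae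
        (μ := volume) (f := fun α => ‖f α‖ ^ 2)
        (s := Set.Ioc ((N + n : ℕ) : ℝ) (((N + n : ℕ) : ℝ) + 1))
        (Eventually.of_forall fun x => by positivity) (hfi.2 _ _)).mp h1
      have h3 := (ae_restrict_iff' measurableSet_Ioc).mp h2
      filter_upwards [h3] with α hα hmem
      have h4 := hα hmem
      simp only [Pi.zero_apply, pow_eq_zero_iff, norm_eq_zero] at h4
      simpa using h4
    have hall := (ae_all_iff).mpr key
    refine ⟨(N : ℝ) + 1, ?_⟩
    filter_upwards [hall] with α hα hβ
    -- find n with N + n < α ≤ N + n + 1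
    set k : ℕ := ⌈α - (N : ℝ)⌉₊ with hk
    have hpos : (0 : ℝ) ≤ α - N := by linarith
    have h1 : α - N ≤ k := Nat.le_ceil _
    have h2 : (k : ℝ) < α - N + 1 := Nat.ceil_lt_add_one hpos
    have hk1 : 1 ≤ k := by
      by_contra h
      push_neg at h
      interval_cases k
      · simp only [Nat.cast_zero] at h1; linarith
    have hcast : ((k - 1 : ℕ) : ℝ) = (k : ℝ) - 1 := by
      push_cast [Nat.cast_sub hk1]
      ring
    have := hα (k - 1)
    apply this
    constructor
    · push_cast [hcast]; linarith
    · push_cast [hcast]; linarith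
  · -- vanishing → L = 0
    rintro ⟨β, hβ⟩
    have hz : Tendsto (fun m : ℕ => ∫ α in (m : ℝ)..((m : ℝ) + 1), ⟪f α, f α⟫_ℂ)
        atTop (𝓝 0) := by
      apply Tendsto.congr' ?_ tendsto_const_nhds
      rw [EventuallyEq, eventually_atTop]
      refine ⟨⌈β⌉₊, fun n hn => ?_⟩
      symm
      rw [intervalIntegral.integral_of_le (by linarith)]
      have hzero : (fun α => ⟪f α, f α⟫_ℂ)
          =ᵐ[volume.restrict (Set.Ioc (n : ℝ) ((n : ℝ) + 1))] 0 := by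
        filter_upwards [ae_restrict_of_ae hβ, ae_restrict_mem measurableSet_Ioc] with α h1 h2
        have hβα : β ≤ α := by
          have hc : (⌈β⌉₊ : ℝ) ≤ (n : ℝ) := by exact_mod_cast hn
          have hb := Nat.le_ceil β
          have := h2.1
          linarith
        rw [h1 hβα]
        simp
      rw [MeasureTheory.integral_congr_ae hzero]
      simp
    exact tendsto_nhds_unique hL hz
end

section
/- Let K be a compact interval [a,b], X a normed space, h : [a,b] → X continuous, and suppose for every β ∈ [a,b] there is h^β : [a,b] → X continuous with ‖h(β) − h^β(β)‖ < ε/2, and each h^β belongs to a linear subspace D of continuous functions closed under multiplication by continuous scalar functions. Then there exists k ∈ D with ‖h(α) − k(α)‖ < ε for all α ∈ [a,b]. -/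
/-- Helper: a subspace `D` closed under addition and scalar-function multiplication,
containing some element, contains `0` and all finite sums of products `φ • g`. -/
theorem pou_aux_zero_mem {X : Type*} [NormedAddCommGroup X] [NormedSpace ℝ X]
    (D : Set (ℝ → X))
    (hDsmul : ∀ φ : ℝ → ℝ, Continuous φ → ∀ k ∈ D, (fun α => φ α • k α) ∈ D)
    (g : ℝ → X) (hg : g ∈ D) : (fun _ : ℝ => (0 : X)) ∈ D := by
  have := hDsmul (fun _ => (0 : ℝ)) continuous_const g hg
  simpa using this

/-- Partition-of-unity approximation: if `h : [a,b] → X` is continuous and for every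
`β ∈ [a,b]` there is a function `h^β` in a subspace `D` (of continuous functions, stable
under multiplication by continuous scalar functions) with `‖h(β) − h^β(β)‖ < ε/2`, then
there is `k ∈ D` with `‖h(α) − k(α)‖ < ε` for all `α ∈ [a,b]`. -/
theorem partition_of_unity_approx {X : Type*} [NormedAddCommGroup X] [NormedSpace ℝ X]
    (a b : ℝ) (hab : a ≤ b) (h : ℝ → X) (hh : ContinuousOn h (Set.Icc a b))
    (D : Set (ℝ → X))
    (hDcont : ∀ k ∈ D, ContinuousOn k (Set.Icc a b))
    (hDadd : ∀ k₁ ∈ D, ∀ k₂ ∈ D, k₁ + k₂ ∈ D)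
    (hDsmul : ∀ φ : ℝ → ℝ, Continuous φ → ∀ k ∈ D, (fun α => φ α • k α) ∈ D)
    (ε : ℝ)
    (happrox : ∀ β ∈ Set.Icc a b, ∃ hb ∈ D, ‖h β - hb β‖ < ε / 2) :
    ∃ k ∈ D, ∀ α ∈ Set.Icc a b, ‖h α - k α‖ < ε := by
  classical
  have ha : a ∈ Set.Icc a b := ⟨le_refl a, hab⟩
  obtain ⟨g₀, hg₀D, hg₀⟩ := happrox a ha
  have hε : 0 < ε := by
    have := norm_nonneg (h a - g₀ a)
    linarith
  -- choose approximants
  have happrox' : ∀ β : Set.Icc a b, ∃ hb ∈ D, ‖h β - hb β‖ < ε / 2 :=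
    fun β => happrox β β.2
  choose g hgD hgβ using happrox'
  -- open sets on which the approximation is good
  have hU : ∀ β : Set.Icc a b, ∃ U : Set ℝ, IsOpen U ∧ (β : ℝ) ∈ U ∧
      ∀ α ∈ U ∩ Set.Icc a b, ‖h α - g β α‖ < ε := by
    intro β
    have hcont : ContinuousOn (fun α => ‖h α - g β α‖) (Set.Icc a b) :=
      (hh.sub (hDcont _ (hgD β))).norm
    have hmem : {α | ‖h α - g β α‖ < ε} ∈ nhdsWithin (β : ℝ) (Set.Icc a b) := by
      have hβlt : ‖h (β : ℝ) - g β (β : ℝ)‖ < ε := lt_of_lt_of_le (hgβ β) (by linarith)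
      have := (hcont (β : ℝ) β.2).eventually_lt_const hβlt
      exact this
    rw [mem_nhdsWithin] at hmem
    obtain ⟨U, hUo, hUβ, hUsub⟩ := hmem
    exact ⟨U, hUo, hUβ, fun α hα => hUsub hα⟩
  choose U hUo hUβ hUgood using hU
  -- finite subcover
  have hcov : Set.Icc a b ⊆ ⋃ β : Set.Icc a b, U β := fun α hα =>
    Set.mem_iUnion.mpr ⟨⟨α, hα⟩, hUβ ⟨α, hα⟩⟩
  obtain ⟨t, ht⟩ := (isCompact_Icc).elim_finite_subcover U hUo hcov
  -- partition of unity on the finite index type ↥t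
  have hcov' : Set.Icc a b ⊆ ⋃ i : t, U i := by
    intro α hα
    obtain ⟨i, hi, hαi⟩ := Set.mem_iUnion₂.mp (ht hα)
    exact Set.mem_iUnion.mpr ⟨⟨i, hi⟩, hαi⟩
  obtain ⟨f, hf⟩ := PartitionOfUnity.exists_isSubordinate (ι := t)
    isClosed_Icc (fun i => U i) (fun i => hUo i) hcov'
  -- the candidate function
  refine ⟨fun α => ∑ i : t, f i α • g i α, ?_, ?_⟩
  · -- membership in D, by induction on the finset
    have key : ∀ s : Finset t, (fun α => ∑ i ∈ s, f i α • g i α) ∈ D := by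
      intro s
      induction s using Finset.induction_on with
      | empty =>
          simpa using pou_aux_zero_mem D hDsmul g₀ hg₀D
      | @insert j s' hj ih =>
          have h1 : (fun α => f j α • g j α) ∈ D :=
            hDsmul (fun α => f j α) (f j).continuous _ (hgD j)
          have := hDadd _ h1 _ ih
          have heq : ((fun α => f j α • g j α) + fun α => ∑ i ∈ s', f i α • g i α)
              = fun α => ∑ i ∈ insert j s', f i α • g i α := by
            funext α
            simp [Finset.sum_insert hj]
          rwa [heq] at this
    exact key Finset.univ
  · -- the estimate
    intro α hα
    have hsum1 : ∑ i : t, f i α = 1 := by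
      have := f.sum_eq_one hα
      rwa [finsum_eq_sum_of_fintype] at this
    have hdiff : h α - ∑ i : t, f i α • g i α = ∑ i : t, f i α • (h α - g i α) := by
      simp only [smul_sub, Finset.sum_sub_distrib, ← Finset.sum_smul, hsum1, one_smul]
    -- for each i with f i α > 0 the local estimate holds
    have hloc : ∀ i : t, 0 < f i α → ‖h α - g i α‖ < ε := by
      intro i hpos
      have hαU : α ∈ U i := hf i (subset_tsupport _ (by
        simpa [Function.mem_support] using ne_of_gt hpos))
      exact hUgood i α ⟨hαU, hα⟩
    have hex : ∃ i : t, 0 < f i α := by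
      by_contra hc
      push_neg at hc
      have : ∑ i : t, f i α = 0 :=
        Finset.sum_eq_zero fun i _ => le_antisymm (hc i) (f.nonneg i α)
      rw [hsum1] at this; norm_num at this
    obtain ⟨i₀, hi₀⟩ := hex
    calc ‖h α - ∑ i : t, f i α • g i α‖
        = ‖∑ i : t, f i α • (h α - g i α)‖ := by rw [hdiff]
      _ ≤ ∑ i : t, ‖f i α • (h α - g i α)‖ := norm_sum_le _ _
      _ = ∑ i : t, f i α * ‖h α - g i α‖ := by
          refine Finset.sum_congr rfl fun i _ => ?_
          rw [norm_smul, Real.norm_eq_abs, abs_of_nonneg (f.nonneg i α)]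
      _ < ∑ i : t, f i α * ε := by
          refine Finset.sum_lt_sum (fun i _ => ?_) ⟨i₀, Finset.mem_univ _, ?_⟩
          · rcases lt_or_eq_of_le (f.nonneg i α) with hpos | hzero
            · exact le_of_lt (mul_lt_mul_of_pos_left (hloc i hpos) hpos)
            · simp [← hzero]
          · exact mul_lt_mul_of_pos_left (hloc i₀ hi₀) hi₀
      _ = ε := by rw [← Finset.sum_mul, hsum1, one_mul]
end

section
/- With notation as in the unitary semigroup construction: u_t := (v_t ⊗ id_H)(id_E ⊗ w_t*) on K = E ⊗ H, for all adjointable a ∈ B^a(E) one has u_t (a ⊗ id_H) u_t* = θ_t(a) ⊗ id_H, where θ_t(a) := v_t(a ⊗ id_{E_t})v_t*. In particular the E₀-semigroup θ_t is implemented by the unitary semigroup u_t on K. -/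
open ContinuousLinearMap

/-- With `u_t := (v_t ⊗ id_H)(id_E ⊗ w_t*)` on `K = E ⊗ H`: for every adjointable `a` on
`E`, conjugation by `u_t` carries `a ⊗ id_H` to `θ_t(a) ⊗ id_H`, where
`θ_t(a) = v_t (a ⊗ id_{E_t}) v_t*`; i.e. the E₀-semigroup `θ_t` is implemented by `u_t`. -/
theorem u_implements_theta
    {E F : Type*}
    {H : Type*} [NormedAddCommGroup H] [InnerProductSpace ℂ H] [CompleteSpace H]
    {K : Type*} [NormedAddCommGroup K] [InnerProductSpace ℂ K] [CompleteSpace K]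
    (emb : E → H → K)      -- `x ⊗ h ∈ E ⊗ H`
    (act : F → H → H)      -- `y_t h = w_t (y_t ⊗ h)`
    (mulE : E → F → E)     -- `x y_t = v_t (x ⊗ y_t)`
    (ut : K →L[ℂ] K)
    (hut₁ : adjoint ut ∘L ut = ContinuousLinearMap.id ℂ K)
    (hut₂ : ut ∘L adjoint ut = ContinuousLinearMap.id ℂ K)
    -- `u_t` acts as `x ⊗ (y_t h) ↦ (x y_t) ⊗ h`:
    (hu : ∀ (x : E) (y : F) (h : H), ut (emb x (act y h)) = emb (mulE x y) h)
    (a θa : E → E)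
    -- `θ_t(a) = v_t (a ⊗ id) v_t*`, i.e. `θ_t(a) (x y_t) = (a x) y_t`:
    (hθ : ∀ (x : E) (y : F), θa (mulE x y) = mulE (a x) y)
    (A A' : K →L[ℂ] K)
    -- `A = a ⊗ id_H` and `A' = θ_t(a) ⊗ id_H`:
    (hA : ∀ (x : E) (h : H), A (emb x h) = emb (a x) h)
    (hA' : ∀ (x : E) (h : H), A' (emb x h) = emb (θa x) h)
    -- vectors `x ⊗ (y_t h)` are total in `K` (the dilations are nondegenerate):
    (htotal : (Submodule.span ℂ
      {k : K | ∃ (x : E) (y : F) (h : H), emb x (act y h) = k}).topologicalClosure = ⊤)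
    (hemb_total :
      (Submodule.span ℂ {k : K | ∃ (x : E) (h : H), emb x h = k}).topologicalClosure = ⊤) :
    ut ∘L A ∘L adjoint ut = A' := by
  have key : ut ∘L A = A' ∘L ut := by
    apply ContinuousLinearMap.ext_on
      (Submodule.dense_iff_topologicalClosure_eq_top.mpr htotal)
    rintro k ⟨x, y, h, rfl⟩
    simp [hA, hu, hA', hθ]
  calc ut ∘L A ∘L adjoint ut = (ut ∘L A) ∘L adjoint ut := by
        rw [ContinuousLinearMap.comp_assoc]
    _ = (A' ∘L ut) ∘L adjoint ut := by rw [key]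
    _ = A' := by rw [ContinuousLinearMap.comp_assoc, hut₂, ContinuousLinearMap.comp_id]
end
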